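/- arXiv:math/0503388 — 4 statements merged into one kernel-verified Lean document; each statement's English description precedes it below -/
import Mathlib

section
/- Let n ≥ 1, let E be an n-dimensional real inner product space, V = ℝ × E × ℝ, and B the tractor metric on V. For every Υ ∈ E, the change-of-splitting map Φ_Υ : V → V, Φ_Υ(x,Y,z) = (x, Y + x·Υ, z − ⟨Υ,Y⟩ − (1/2)⟨Υ,Υ⟩·x), is a linear map satisfying B(Φ_Υ u, Φ_Υ v) = B(u, v) for all u, v ∈ V. -/
namespace Tractor

variable {E : Type*} [NormedAddCommGroup E] [InnerProductSpace ℝ E]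

def metric (u v : ℝ × E × ℝ) : ℝ :=
  u.1 * v.2.2 + v.1 * u.2.2 + inner ℝ u.2.1 v.2.1

/-- The change of splitting `Φ_Υ` induced by changing the preferred connection by `Υ`. -/
noncomputable def changeOfSplitting (Υ : E) : (ℝ × E × ℝ) →ₗ[ℝ] (ℝ × E × ℝ) where
  toFun p := (p.1, p.2.1 + p.1 • Υ, p.2.2 - inner ℝ Υ p.2.1 - (1 / 2) * inner ℝ Υ Υ * p.1)
  map_add' p q := by
    simp only [Prod.fst_add, Prod.snd_add, Prod.mk_add_mk, inner_add_right]
    refine Prod.ext rfl (Prod.ext ?_ ?_) <;> [module; ring]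
  map_smul' c p := by
    simp only [Prod.smul_fst, Prod.smul_snd, Prod.smul_mk, inner_smul_right,
      RingHom.id_apply, smul_eq_mul]
    refine Prod.ext rfl (Prod.ext ?_ ?_) <;> [module; ring]

@[simp]
theorem changeOfSplitting_apply (Υ : E) (x : ℝ) (Y : E) (z : ℝ) :
    changeOfSplitting Υ (x, Y, z) =
      (x, Y + x • Υ, z - inner ℝ Υ Y - (1 / 2) * inner ℝ Υ Υ * x) :=
  rfl

/-- The cross terms `x ⟨Υ, Y'⟩` created in the `E`-component are cancelled by the shift
`-⟨Υ, Y⟩` of the last component, and the `x x' ⟨Υ, Υ⟩` term by its `-½ ⟨Υ, Υ⟩ x` shift. -/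
theorem metric_changeOfSplitting (Υ : E) (u v : ℝ × E × ℝ) :
    metric (changeOfSplitting Υ u) (changeOfSplitting Υ v) = metric u v := by
  obtain ⟨x, Y, z⟩ := u
  obtain ⟨x', Y', z'⟩ := v
  simp only [metric, changeOfSplitting_apply, inner_add_left, inner_add_right,
    real_inner_smul_left, real_inner_smul_right, real_inner_comm Υ]
  ring

end Tractor

theorem stmt_1_general
    (E : Type*) [NormedAddCommGroup E] [InnerProductSpace ℝ E]
    (B : (ℝ × E × ℝ) → (ℝ × E × ℝ) → ℝ)
    (hB : ∀ u v : ℝ × E × ℝ,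
      B u v = u.1 * v.2.2 + v.1 * u.2.2 + (inner ℝ u.2.1 v.2.1 : ℝ)) :
    ∀ Υ : E, ∃ Φ : (ℝ × E × ℝ) →ₗ[ℝ] (ℝ × E × ℝ),
      (∀ (x : ℝ) (Y : E) (z : ℝ),
        Φ (x, Y, z) = (x, Y + x • Υ,
          z - (inner ℝ Υ Y : ℝ) - (1 / 2) * (inner ℝ Υ Υ : ℝ) * x)) ∧
      ∀ u v : ℝ × E × ℝ, B (Φ u) (Φ v) = B u v := by
  have hB' : B = Tractor.metric := funext₂ hB
  subst hB'
  exact fun Υ => ⟨Tractor.changeOfSplitting Υ, Tractor.changeOfSplitting_apply Υ,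
    Tractor.metric_changeOfSplitting Υ⟩

/-- The change-of-splitting map Φ_Υ is linear and preserves the
tractor metric B. -/
theorem stmt_1 {n : ℕ} (hn : 1 ≤ n)
    (E : Type*) [NormedAddCommGroup E] [InnerProductSpace ℝ E]
    [FiniteDimensional ℝ E] (hdim : Module.finrank ℝ E = n)
    (B : (ℝ × E × ℝ) → (ℝ × E × ℝ) → ℝ)
    (hB : ∀ u v : ℝ × E × ℝ,
      B u v = u.1 * v.2.2 + v.1 * u.2.2 + (inner ℝ u.2.1 v.2.1 : ℝ)) :
    ∀ Υ : E, ∃ Φ : (ℝ × E × ℝ) →ₗ[ℝ] (ℝ × E × ℝ),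
      (∀ (x : ℝ) (Y : E) (z : ℝ),
        Φ (x, Y, z) = (x, Y + x • Υ,
          z - (inner ℝ Υ Y : ℝ) - (1 / 2) * (inner ℝ Υ Υ : ℝ) * x)) ∧
      ∀ u v : ℝ × E × ℝ, B (Φ u) (Φ v) = B u v :=
  stmt_1_general E B hB
end

section
/- Let E be a finite-dimensional real inner product space of dimension at least 2, and let q : E → E → E be a bilinear map which is symmetric, q(X,Y) = q(Y,X). Then the following are equivalent: (i) for every X ∈ E there exists c ∈ ℝ such that ⟨q(X,Y), Z⟩ + ⟨Y, q(X,Z)⟩ = 2c·⟨Y,Z⟩ for all Y, Z ∈ E (i.e. q(X,·) lies in 𝔠𝔬(E) = 𝔰𝔬(E) ⊕ ℝ·id); (ii) there exists a unique Υ ∈ E such that q(X,Y) = ⟨Υ,X⟩·Y + ⟨Υ,Y⟩·X − ⟨X,Y⟩·Υ for all X, Y ∈ E. -/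
/-!
For a symmetric `q` with `q(X, ·) ∈ 𝔠𝔬(E)` of scale `c X`, the Christoffel trick (add the
conformality identities for the three cyclic permutations of `(X, Y, Z)` and use symmetry) gives
`⟪q(X,Y), Z⟫ = c X ⟪Y,Z⟫ + c Y ⟪X,Z⟫ - c Z ⟪X,Y⟫`. Testing conformality on a unit vector `u`
(when `E ≠ 0`) shows `c X = ⟪q(X,u), u⟫`, which is linear in `X`, so `c = ⟪Υ, ·⟫` by Riesz.
Uniqueness of `Υ` follows from `⟪q(X,X), X⟫ = ⟪Υ,X⟫ ‖X‖²`.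
-/

open scoped RealInnerProductSpace

section

variable {E : Type*} [NormedAddCommGroup E] [InnerProductSpace ℝ E]

/-- `conformalShift Υ X` is the paper's `[Υ, X]`, the difference of two preferred connections. -/
def conformalShift (Υ X Y : E) : E := ⟪Υ, X⟫ • Y + ⟪Υ, Y⟫ • X - ⟪X, Y⟫ • Υ

theorem inner_conformalShift_left (Υ X Y Z : E) :
    ⟪conformalShift Υ X Y, Z⟫ = ⟪Υ, X⟫ * ⟪Y, Z⟫ + ⟪Υ, Y⟫ * ⟪X, Z⟫ - ⟪Υ, Z⟫ * ⟪X, Y⟫ := by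
  simp only [conformalShift, inner_add_left, inner_sub_left, real_inner_smul_left]
  ring

theorem inner_conformalShift_add_inner_conformalShift (Υ X Y Z : E) :
    ⟪conformalShift Υ X Y, Z⟫ + ⟪Y, conformalShift Υ X Z⟫ = 2 * ⟪Υ, X⟫ * ⟪Y, Z⟫ := by
  rw [real_inner_comm (conformalShift Υ X Z) Y, inner_conformalShift_left,
    inner_conformalShift_left, real_inner_comm Y Z]
  ring

theorem conformalShift_injective {Υ Υ' : E}
    (h : ∀ X Y, conformalShift Υ X Y = conformalShift Υ' X Y) : Υ = Υ' := by
  refine ext_inner_right ℝ fun X => ?_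
  rcases eq_or_ne X 0 with rfl | hX
  · simp
  have hdiag : ∀ Υ : E, ⟪conformalShift Υ X X, X⟫ = ⟪Υ, X⟫ * ⟪X, X⟫ := fun Υ => by
    rw [inner_conformalShift_left]
    ring
  have hXX : ⟪X, X⟫ ≠ 0 := inner_self_ne_zero.mpr hX
  exact mul_right_cancel₀ hXX (by rw [← hdiag, ← hdiag, h])

theorem inner_eq_of_conformal {q : E → E → E} {c : E → ℝ} (hsymm : ∀ X Y, q X Y = q Y X)
    (hc : ∀ X Y Z, ⟪q X Y, Z⟫ + ⟪Y, q X Z⟫ = 2 * c X * ⟪Y, Z⟫) (X Y Z : E) :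
    ⟪q X Y, Z⟫ = c X * ⟪Y, Z⟫ + c Y * ⟪X, Z⟫ - c Z * ⟪X, Y⟫ := by
  have hXYZ := hc X Y Z
  have hZXY := hc Z X Y
  have hYZX := hc Y Z X
  rw [real_inner_comm (q X Z) Y, hsymm X Z] at hXYZ
  rw [real_inner_comm (q Z Y) X, hsymm Z Y] at hZXY
  rw [real_inner_comm (q Y X) Z, hsymm Y X, real_inner_comm X Z] at hYZX
  linarith

theorem eq_inner_of_conformal_of_norm_eq_one {A : E → E} {c : ℝ}
    (hc : ∀ Y Z, ⟪A Y, Z⟫ + ⟪Y, A Z⟫ = 2 * c * ⟪Y, Z⟫) {u : E} (hu : ‖u‖ = 1) :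
    c = ⟪A u, u⟫ := by
  have huu := hc u u
  rw [real_inner_comm (A u) u, real_inner_self_eq_norm_sq, hu] at huu
  linarith

theorem exists_eq_conformalShift_of_conformal [FiniteDimensional ℝ E] {q : E →ₗ[ℝ] E →ₗ[ℝ] E}
    {c : E → ℝ} (hsymm : ∀ X Y, q X Y = q Y X)
    (hc : ∀ X Y Z, ⟪q X Y, Z⟫ + ⟪Y, q X Z⟫ = 2 * c X * ⟪Y, Z⟫) :
    ∃ Υ : E, ∀ X Y, q X Y = conformalShift Υ X Y := by
  cases subsingleton_or_nontrivial E
  · exact ⟨0, fun _ _ => Subsingleton.elim _ _⟩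
  obtain ⟨u, hu⟩ := exists_norm_eq E zero_le_one
  let Υ : E := (InnerProductSpace.toDual ℝ E).symm
    (LinearMap.toContinuousLinearMap (innerₗ E u ∘ₗ q.flip u))
  have hΥ : ∀ X, ⟪Υ, X⟫ = c X := fun X => by
    rw [InnerProductSpace.toDual_symm_apply, eq_inner_of_conformal_of_norm_eq_one (hc X) hu]
    exact real_inner_comm _ _
  refine ⟨Υ, fun X Y => ext_inner_right ℝ fun Z => ?_⟩
  rw [inner_eq_of_conformal hsymm hc, inner_conformalShift_left, hΥ, hΥ, hΥ]

end

theorem stmt_8_general (E : Type*) [NormedAddCommGroup E] [InnerProductSpace ℝ E]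
    [FiniteDimensional ℝ E]
    (q : E →ₗ[ℝ] E →ₗ[ℝ] E) (hsymm : ∀ X Y : E, q X Y = q Y X) :
    (∀ X : E, ∃ c : ℝ, ∀ Y Z : E,
      (inner ℝ (q X Y) Z : ℝ) + (inner ℝ Y (q X Z) : ℝ) = 2 * c * (inner ℝ Y Z : ℝ)) ↔
    (∃! Υ : E, ∀ X Y : E,
      q X Y = (inner ℝ Υ X : ℝ) • Y + (inner ℝ Υ Y : ℝ) • X - (inner ℝ X Y : ℝ) • Υ) := by
  constructor
  · intro hco
    choose c hc using hco
    obtain ⟨Υ, hΥ⟩ := exists_eq_conformalShift_of_conformal hsymm hc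
    exact ⟨Υ, hΥ, fun Υ' hΥ' => conformalShift_injective fun X Y => (hΥ' X Y).symm.trans (hΥ X Y)⟩
  · rintro ⟨Υ, hΥ, -⟩ X
    refine ⟨⟪Υ, X⟫, fun Y Z => ?_⟩
    rw [hΥ X Y, hΥ X Z]
    exact inner_conformalShift_add_inner_conformalShift Υ X Y Z

/-- A symmetric bilinear map q : E × E → E has all its value maps
q(X,·) in 𝔠𝔬(E) iff q(X,Y) = ⟨Υ,X⟩Y + ⟨Υ,Y⟩X − ⟨X,Y⟩Υ for a unique Υ ∈ E. -/
theorem stmt_8 (E : Type*) [NormedAddCommGroup E] [InnerProductSpace ℝ E]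
    [FiniteDimensional ℝ E] (hdim : 2 ≤ Module.finrank ℝ E)
    (q : E →ₗ[ℝ] E →ₗ[ℝ] E) (hsymm : ∀ X Y : E, q X Y = q Y X) :
    (∀ X : E, ∃ c : ℝ, ∀ Y Z : E,
      (inner ℝ (q X Y) Z : ℝ) + (inner ℝ Y (q X Z) : ℝ) = 2 * c * (inner ℝ Y Z : ℝ)) ↔
    (∃! Υ : E, ∀ X Y : E,
      q X Y = (inner ℝ Υ X : ℝ) • Y + (inner ℝ Υ Y : ℝ) • X - (inner ℝ X Y : ℝ) • Υ) :=
  stmt_8_general E q hsymm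
end

section
/- Let E be a finite-dimensional real inner product space, F a real vector space, and Φ : E → E → F a symmetric bilinear map (Φ(X,Y) = Φ(Y,X)) such that Φ(X,Y) = 0 whenever ⟨X,Y⟩ = 0. Then there exists H ∈ F such that Φ(X,Y) = ⟨X,Y⟩ · H for all X, Y ∈ E. -/
/-! Since ‖u‖ = ‖v‖ exactly when u + v ⟂ u - v, symmetry gives Φ(u,u) - Φ(v,v) = Φ(u+v, u-v) = 0,
so the quadratic form X ↦ Φ(X,X) depends only on ‖X‖; scaling a unit vector e gives
Φ(X,X) = ⟨X,X⟩ Φ(e,e), and polarization recovers Φ(X,Y) = ⟨X,Y⟩ Φ(e,e). -/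

namespace LinearMap

variable {R M N : Type*} [CommRing R] [Invertible (2 : R)] [AddCommGroup M] [Module R M]
  [AddCommGroup N] [Module R N]

theorem ext_of_apply_self_eq {Φ Ψ : M →ₗ[R] M →ₗ[R] N}
    (hΦ : ∀ x y, Φ x y = Φ y x) (hΨ : ∀ x y, Ψ x y = Ψ y x) (h : ∀ x, Φ x x = Ψ x x) :
    Φ = Ψ := by
  ext x y
  have hsum := h (x + y)
  simp only [map_add, add_apply, h x, h y, hΦ y x, hΨ y x] at hsum
  have hdouble : (2 : R) • Φ x y = (2 : R) • Ψ x y := by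
    rw [two_smul, two_smul]
    linear_combination (norm := module) hsum
  simpa using congrArg ((⅟2 : R) • ·) hdouble

end LinearMap

section

variable {E F : Type*} [NormedAddCommGroup E] [InnerProductSpace ℝ E] [AddCommGroup F] [Module ℝ F]

theorem apply_self_eq_of_norm_eq {Φ : E →ₗ[ℝ] E →ₗ[ℝ] F} (hsymm : ∀ X Y, Φ X Y = Φ Y X)
    (horth : ∀ X Y, inner ℝ X Y = (0 : ℝ) → Φ X Y = 0) {u v : E} (huv : ‖u‖ = ‖v‖) :
    Φ u u = Φ v v := by
  have h := horth (u + v) (u - v) ((real_inner_add_sub_eq_zero_iff u v).2 huv)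
  simp only [map_add, map_sub, LinearMap.add_apply, hsymm v u] at h
  exact sub_eq_zero.1 (by rw [← h]; abel)

theorem apply_self_eq_inner_self_smul {Φ : E →ₗ[ℝ] E →ₗ[ℝ] F} (hsymm : ∀ X Y, Φ X Y = Φ Y X)
    (horth : ∀ X Y, inner ℝ X Y = (0 : ℝ) → Φ X Y = 0) {e : E} (he : ‖e‖ = 1) (X : E) :
    Φ X X = inner ℝ X X • Φ e e := by
  have hnorm : ‖X‖ = ‖‖X‖ • e‖ := by simp [norm_smul, he]
  rw [apply_self_eq_of_norm_eq hsymm horth hnorm, real_inner_self_eq_norm_sq]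
  simp only [map_smul, LinearMap.smul_apply, smul_smul, sq]

end

theorem stmt_10_general (E : Type*) [NormedAddCommGroup E] [InnerProductSpace ℝ E]
    (F : Type*) [AddCommGroup F] [Module ℝ F]
    (Φ : E →ₗ[ℝ] E →ₗ[ℝ] F)
    (hsymm : ∀ X Y : E, Φ X Y = Φ Y X)
    (horth : ∀ X Y : E, (inner ℝ X Y : ℝ) = 0 → Φ X Y = 0) :
    ∃ H : F, ∀ X Y : E, Φ X Y = (inner ℝ X Y : ℝ) • H := by
  rcases subsingleton_or_nontrivial E with hE | hE
  · exact ⟨0, fun X Y => by simp [Subsingleton.elim X 0]⟩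
  obtain ⟨e, he⟩ := exists_norm_eq E zero_le_one
  refine ⟨Φ e e, fun X Y => ?_⟩
  have hΦ : Φ = (innerₗ E).compr₂ (LinearMap.toSpanSingleton ℝ F (Φ e e)) := by
    refine LinearMap.ext_of_apply_self_eq hsymm (fun X Y => ?_) fun X => ?_
    · simp [real_inner_comm]
    · simpa using apply_self_eq_inner_self_smul hsymm horth he X
  simpa using LinearMap.congr_fun₂ hΦ X Y

/-- A symmetric bilinear map Φ vanishing on orthogonal pairs is
of the form Φ(X,Y) = ⟨X,Y⟩·H (umbilicity lemma, pointwise form). -/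
theorem stmt_10 (E : Type*) [NormedAddCommGroup E] [InnerProductSpace ℝ E]
    [FiniteDimensional ℝ E]
    (F : Type*) [AddCommGroup F] [Module ℝ F]
    (Φ : E →ₗ[ℝ] E →ₗ[ℝ] F)
    (hsymm : ∀ X Y : E, Φ X Y = Φ Y X)
    (horth : ∀ X Y : E, (inner ℝ X Y : ℝ) = 0 → Φ X Y = 0) :
    ∃ H : F, ∀ X Y : E, Φ X Y = (inner ℝ X Y : ℝ) • H :=
  stmt_10_general E F Φ hsymm horth
end

section
/- Let l and n be natural numbers with 2 ≤ l and l + 2 ≤ n, and let λ₁, λ₂ be real numbers. Then the following three statements are equivalent (all expressions taken in ℝ, with l and n cast to ℝ): (i) −((2n−2−l)·λ₁ + (l−n)·λ₂) / ((n−2)·(2n−2)) = −λ₁ / (2·(l−1)); (ii) −((−l)·λ₁ + (n−2+l)·λ₂) / ((n−2)·(2n−2)) = −λ₂ / (2·(n−l−1)); (iii) (n−l−1)·λ₁ = (1−l)·λ₂. -/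
/-- Equivalence of 𝖯₁ = 𝖯_{N₁}, 𝖯₂ = 𝖯_{N₂}, and the Einstein
constant relation (n−l−1)λ₁ = (1−l)λ₂ in the decomposition theorem. -/
theorem stmt_13 (l n : ℕ) (hl : 2 ≤ l) (hn : l + 2 ≤ n) (lam₁ lam₂ : ℝ) :
    [ -(((2 * (n : ℝ) - 2 - (l : ℝ)) * lam₁ + ((l : ℝ) - (n : ℝ)) * lam₂) /
        (((n : ℝ) - 2) * (2 * (n : ℝ) - 2))) = -lam₁ / (2 * ((l : ℝ) - 1)),
      -((-(l : ℝ) * lam₁ + ((n : ℝ) - 2 + (l : ℝ)) * lam₂) /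
        (((n : ℝ) - 2) * (2 * (n : ℝ) - 2))) = -lam₂ / (2 * ((n : ℝ) - (l : ℝ) - 1)),
      ((n : ℝ) - (l : ℝ) - 1) * lam₁ = (1 - (l : ℝ)) * lam₂ ].TFAE := by
  have hl' : (2 : ℝ) ≤ (l : ℝ) := by exact_mod_cast hl
  have hn' : (l : ℝ) + 2 ≤ (n : ℝ) := by exact_mod_cast hn
  have hD : (((n : ℝ) - 2) * (2 * (n : ℝ) - 2)) ≠ 0 :=
    mul_ne_zero (by nlinarith) (by nlinarith)
  have hE1 : (2 * ((l : ℝ) - 1)) ≠ 0 := by nlinarith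
  have hE2 : (2 * ((n : ℝ) - (l : ℝ) - 1)) ≠ 0 := by nlinarith
  have hnl : (2 * ((n : ℝ) - (l : ℝ))) ≠ 0 := by nlinarith
  have hl0 : (2 * (l : ℝ)) ≠ 0 := by nlinarith
  tfae_have 1 ↔ 3 := by
    rw [← neg_div, div_eq_div_iff hD hE1]
    constructor
    · intro h
      refine mul_left_cancel₀ hnl ?_
      linear_combination h
    · intro h
      linear_combination 2 * ((n : ℝ) - (l : ℝ)) * h
  tfae_have 2 ↔ 3 := by
    rw [← neg_div, div_eq_div_iff hD hE2]
    constructor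
    · intro h
      refine mul_left_cancel₀ hl0 ?_
      linear_combination h
    · intro h
      linear_combination 2 * (l : ℝ) * h
  tfae_finish
end
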